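/- Let p ≥ 1, let β ∈ ℝᵖ with ‖β‖ = 1, let C ∈ (0,1] and δ ∈ (0,1/4), and set m = √(1+δ²). Define η : ℝᵖ → ℝ by: η(x) = 1/2 + ⟨β,x⟩/C if |⟨β,x⟩| ≤ min( max(C·δ, |x₁|/(2m)), 1/4 ), and η(x) = 1/2 + min( max(δ, |x₁|/(2Cm)), 1/4 )·sign(⟨β,x⟩) otherwise, where x₁ denotes the first coordinate of x. Then for every real t with 0 < t < 1/4: μ_p{ x ∈ ℝᵖ : |η(x) − 1/2| ≤ t } ≤ 5·√(2/π)·C·t. -/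

import Mathlib

open MeasureTheory
open scoped Classical

/-- The standard Gaussian measure on `ℝᵖ`, i.e. the `p`-fold product of `N(0,1)`. -/
noncomputable def stdGaussian (p : ℕ) : Measure (EuclideanSpace ℝ (Fin p)) :=
  Measure.map (MeasurableEquiv.toLp 2 (Fin p → ℝ))
    (Measure.pi fun _ : Fin p => ProbabilityTheory.gaussianReal 0 1)

/-!
If `|η x - 1/2| ≤ t < 1/4`, then either `η` is on its linear branch, so `|⟨β, x⟩| ≤ C t`, or on
its saturated branch, so `|x₁| ≤ 2 C m t ≤ 4 C t`. Under `μ_p` both `⟨β, x⟩` and `x₁` are standard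
normal, and a standard normal lies in `[-a, a]` with probability at most `2a / √(2π) = √(2/π) a`.
-/

open Real Set

section GaussianSlab

open ProbabilityTheory

lemma gaussianPDFReal_zero_one_le (x : ℝ) : gaussianPDFReal 0 1 x ≤ (√(2 * π))⁻¹ := by
  have hexp : exp (-x ^ 2 / 2) ≤ 1 := exp_le_one_iff.mpr (by nlinarith [sq_nonneg x])
  simpa [gaussianPDFReal_def] using mul_le_of_le_one_right (by positivity) hexp

lemma gaussianReal_real_Icc_neg_le {a : ℝ} (ha : 0 ≤ a) :
    (gaussianReal 0 1).real (Icc (-a) a) ≤ √(2 / π) * a := by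
  have h2π : √(2 / π) * √(2 * π) = 2 := by
    rw [← sqrt_mul (by positivity), show 2 / π * (2 * π) = 2 ^ 2 by field_simp,
      sqrt_sq zero_le_two]
  calc (gaussianReal 0 1).real (Icc (-a) a)
      = ∫ x in Icc (-a) a, gaussianPDFReal 0 1 x := by
        rw [measureReal_def, gaussianReal_apply_eq_integral 0 one_ne_zero, ENNReal.toReal_ofReal
          (setIntegral_nonneg measurableSet_Icc fun x _ ↦ gaussianPDFReal_nonneg _ _ x)]
    _ ≤ ∫ _ in Icc (-a) a, (√(2 * π))⁻¹ :=
        setIntegral_mono_on (integrable_gaussianPDFReal 0 1).integrableOn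
          (integrableOn_const (by simp)) measurableSet_Icc
          fun x _ ↦ gaussianPDFReal_zero_one_le x
    _ = √(2 / π) * a := by
        rw [setIntegral_const, measureReal_def, volume_Icc, ENNReal.toReal_ofReal (by linarith),
          smul_eq_mul]
        field_simp
        linear_combination (-a) * h2π

lemma stdGaussian_eq_stdGaussian_euclideanSpace (p : ℕ) :
    _root_.stdGaussian p = ProbabilityTheory.stdGaussian (EuclideanSpace ℝ (Fin p)) := by
  rw [_root_.stdGaussian, MeasurableEquiv.coe_toLp, map_pi_eq_stdGaussian]

variable {E : Type*} [NormedAddCommGroup E] [InnerProductSpace ℝ E] [FiniteDimensional ℝ E]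
  [MeasurableSpace E] [BorelSpace E]

lemma stdGaussian_map_innerSL {v : E} (hv : ‖v‖ = 1) :
    (ProbabilityTheory.stdGaussian E).map (innerSL ℝ v) = gaussianReal 0 1 := by
  rw [IsGaussian.map_eq_gaussianReal, integral_strongDual_stdGaussian, variance_dual_stdGaussian,
    innerSL_apply_norm, hv]
  simp

lemma stdGaussian_real_abs_inner_le {v : E} (hv : ‖v‖ = 1) {a : ℝ} (ha : 0 ≤ a) :
    (ProbabilityTheory.stdGaussian E).real {x | |inner ℝ v x| ≤ a} ≤ √(2 / π) * a := by
  have hslab : {x | |inner ℝ v x| ≤ a} = innerSL ℝ v ⁻¹' Icc (-a) a := by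
    ext x
    simp [abs_le]
  rw [hslab, ← map_measureReal_apply (by fun_prop) measurableSet_Icc, stdGaussian_map_innerSL hv]
  exact gaussianReal_real_Icc_neg_le ha

lemma stdGaussian_real_abs_apply_le {ι : Type*} [Fintype ι] (i : ι) {a : ℝ} (ha : 0 ≤ a) :
    (ProbabilityTheory.stdGaussian (EuclideanSpace ℝ ι)).real {x | |x i| ≤ a} ≤ √(2 / π) * a := by
  simpa [EuclideanSpace.inner_single_left] using
    stdGaussian_real_abs_inner_le (v := EuclideanSpace.single i (1 : ℝ)) (by simp) ha

end GaussianSlab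

/-- `transitionEta C δ m ⟨β, x⟩ x₁` is the paper's `η(x)`. -/
noncomputable def transitionEta (C δ m s u : ℝ) : ℝ :=
  if |s| ≤ min (max (C * δ) (|u| / (2 * m))) (1/4) then 1/2 + s / C
  else 1/2 + min (max δ (|u| / (2 * C * m))) (1/4) * Real.sign s

lemma abs_le_or_abs_le_of_abs_transitionEta_sub_half_le {C δ m s u t : ℝ} (hC : 0 < C)
    (hm : 0 < m) (ht : t < 1/4) (h : |transitionEta C δ m s u - 1/2| ≤ t) :
    |s| ≤ C * t ∨ |u| ≤ 2 * C * m * t := by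
  unfold transitionEta at h
  split_ifs at h with hs
  · left
    rwa [add_sub_cancel_left, abs_div, abs_of_pos hC, div_le_iff₀ hC, mul_comm] at h
  · right
    have hs0 : s ≠ 0 := by
      rintro rfl
      exact hs (by simp only [abs_zero]; positivity)
    have hmin : min (max δ (|u| / (2 * C * m))) (1/4) ≤ t := by
      rw [add_sub_cancel_left, abs_mul] at h
      rcases sign_apply_eq_of_ne_zero s hs0 with hsign | hsign <;>
        simp only [hsign, abs_neg, abs_one, mul_one] at h <;>
        exact (le_abs_self _).trans h
    have hu : |u| / (2 * C * m) ≤ t := by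
      rcases min_le_iff.mp hmin with hmax | hquarter
      · exact (le_max_right _ _).trans hmax
      · linarith
    rwa [div_le_iff₀ (by positivity), mul_comm] at hu

theorem minimax_construction_transition_condition {p : ℕ} (hp : 1 ≤ p)
    (β : EuclideanSpace ℝ (Fin p)) (hβ : ‖β‖ = 1)
    (C δ : ℝ) (hC : C ∈ Set.Ioc (0 : ℝ) 1) (hδ : δ ∈ Set.Ioo (0 : ℝ) (1/4))
    (t : ℝ) (ht : t ∈ Set.Ioo (0 : ℝ) (1/4)) :
    let m : ℝ := Real.sqrt (1 + δ ^ 2)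
    let η : EuclideanSpace ℝ (Fin p) → ℝ := fun x =>
      if |(inner ℝ β x : ℝ)| ≤ min (max (C * δ) (|x ⟨0, hp⟩| / (2 * m))) (1/4) then
        1/2 + (inner ℝ β x : ℝ) / C
      else
        1/2 + min (max δ (|x ⟨0, hp⟩| / (2 * C * m))) (1/4) * Real.sign (inner ℝ β x : ℝ)
    (stdGaussian p {x | |η x - 1/2| ≤ t}).toReal ≤ 5 * Real.sqrt (2 / Real.pi) * C * t := by
  intro m η
  have hm0 : 0 < m := sqrt_pos.2 (by positivity)
  have hm2 : m ≤ 2 := sqrt_le_iff.2 ⟨zero_le_two, by nlinarith [hδ.1, hδ.2]⟩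
  have hCt : 0 ≤ C * t := mul_nonneg hC.1.le ht.1.le
  have hsub : {x | |η x - 1/2| ≤ t} ⊆
      {x | |inner ℝ β x| ≤ C * t} ∪ {x | |x ⟨0, hp⟩| ≤ 2 * C * m * t} :=
    fun x hx ↦ abs_le_or_abs_le_of_abs_transitionEta_sub_half_le (δ := δ) hC.1 hm0 ht.2 hx
  rw [← measureReal_def, stdGaussian_eq_stdGaussian_euclideanSpace]
  calc _ ≤ _ := (measureReal_mono hsub).trans (measureReal_union_le _ _)
    _ ≤ √(2 / π) * (C * t) + √(2 / π) * (2 * C * m * t) :=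
        add_le_add (stdGaussian_real_abs_inner_le hβ hCt)
          (stdGaussian_real_abs_apply_le _ (by have := hC.1; have := ht.1; positivity))
    _ ≤ 5 * √(2 / π) * C * t := by nlinarith [mul_nonneg (sqrt_nonneg (2 / π)) hCt]
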